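/- There exist exactly N² rank-one projections P₁, …, P_{N²} (matrices of the form v vᴴ / (vᴴv) for nonzero v ∈ ℂ^N) that form a basis of the real vector space of Hermitian N×N matrices. -/

import Mathlib

/-!
Every complex star module `A` splits ℝ-linearly as `A ≃ selfAdjoint A × selfAdjoint A`,
`a ↦ (ℜ a, ℑ a)`; for `A = Mat_N(ℂ)`, of real dimension `2N²`, this gives `N²` for the
Hermitian matrices. By the spectral theorem every Hermitian matrix is a real combination
`∑ λₖ uₖuₖᴴ` of rank-one projections onto orthonormal eigenvectors, so the rank-one projections
span the Hermitian matrices, and any spanning set contains a basis.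
-/

open Matrix Module Submodule ComplexStarModule
open scoped ComplexOrder

section ComplexStarModule

variable {A : Type*} [AddCommGroup A] [Module ℂ A] [StarAddMonoid A] [StarModule ℂ A]

noncomputable def realPartProdImaginaryPart :
    A ≃ₗ[ℝ] selfAdjoint.submodule ℝ A × selfAdjoint.submodule ℝ A :=
  LinearEquiv.ofBijective (realPart.prod imaginaryPart)
    ⟨fun _ _ h => ComplexStarModule.ext (congrArg Prod.fst h) (congrArg Prod.snd h),
     fun ⟨a, b⟩ => ⟨a + Complex.I • (b : A), by ext <;> simp⟩⟩

theorem finrank_real_eq_two_mul_finrank_selfAdjoint [FiniteDimensional ℝ A] :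
    finrank ℝ A = 2 * finrank ℝ (selfAdjoint.submodule ℝ A) := by
  rw [realPartProdImaginaryPart.finrank_eq, finrank_prod, two_mul]

end ComplexStarModule

theorem Matrix.finrank_selfAdjoint (n : Type*) [Fintype n] :
    finrank ℝ (selfAdjoint.submodule ℝ (Matrix n n ℂ)) = Fintype.card n ^ 2 := by
  have h := finrank_real_eq_two_mul_finrank_selfAdjoint (A := Matrix n n ℂ)
  rw [finrank_real_of_complex, finrank_matrix, finrank_self, mul_one] at h
  rw [sq]
  lia

theorem Submodule.exists_basis_fin_of_le_span {K V : Type*} [DivisionRing K] [AddCommGroup V]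
    [Module K V] {W : Submodule K V} [FiniteDimensional K W] {s : Set V} {n : ℕ}
    (hsW : s ⊆ W) (hWs : W ≤ span K s) (hn : finrank K W = n) :
    ∃ b : Basis (Fin n) K W, ∀ i, (b i : V) ∈ s := by
  obtain rfl : span K s = W := le_antisymm (span_le.2 hsW) hWs
  let b := Basis.ofSpan (span_span_coe_preimage (R := K) (s := s)).ge
  refine ⟨b.reindex ((b.indexEquiv (finBasis K _)).trans (finCongr hn)), fun i => ?_⟩
  rw [Basis.reindex_apply]
  exact (Basis.ofSpan_subset _ (Set.mem_range_self _) : b _ ∈ Subtype.val ⁻¹' s)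

section RankOneProjection

variable {𝕜 n : Type*} [RCLike 𝕜] [Fintype n]

theorem OrthonormalBasis.star_dotProduct_self {ι : Type*} [Fintype ι]
    (b : OrthonormalBasis ι 𝕜 (EuclideanSpace 𝕜 n)) (i : ι) :
    star ⇑(b i) ⬝ᵥ ⇑(b i) = 1 := by
  rw [dotProduct_comm, ← EuclideanSpace.inner_eq_star_dotProduct]
  simp

theorem Matrix.IsHermitian.eq_sum_eigenvalues_smul_vecMulVec [DecidableEq n]
    {A : Matrix n n 𝕜} (hA : A.IsHermitian) :
    A = ∑ i, hA.eigenvalues i •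
      vecMulVec ⇑(hA.eigenvectorBasis i) (star ⇑(hA.eigenvectorBasis i)) := by
  conv_lhs => rw [hA.spectral_theorem]
  ext i j
  rw [Unitary.conjStarAlgAut_apply, mul_apply, Matrix.sum_apply]
  refine Finset.sum_congr rfl fun k _ => ?_
  simp only [mul_diagonal, eigenvectorUnitary_apply, Function.comp_apply, star_apply,
    RCLike.star_def, smul_apply, vecMulVec_apply, Pi.star_apply, RCLike.real_smul_eq_coe_mul]
  ring

def Matrix.rankOneProjection (v : n → 𝕜) : Matrix n n 𝕜 :=
  (star v ⬝ᵥ v)⁻¹ • vecMulVec v (star v)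

variable (𝕜 n) in
def Matrix.rankOneProjections : Set (Matrix n n 𝕜) :=
  {P | ∃ v : n → 𝕜, v ≠ 0 ∧ P = rankOneProjection v}

theorem Matrix.isSelfAdjoint_rankOneProjection (v : n → 𝕜) :
    IsSelfAdjoint (rankOneProjection v) := by
  rw [rankOneProjection]
  exact .smul (IsSelfAdjoint.of_nonneg (dotProduct_star_self_nonneg v)).inv₀
    (posSemidef_vecMulVec_self_star v).isHermitian

theorem Matrix.rankOneProjection_eq_vecMulVec {v : n → 𝕜} (hv : star v ⬝ᵥ v = 1) :
    rankOneProjection v = vecMulVec v (star v) := by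
  rw [rankOneProjection, hv, inv_one, one_smul]

theorem Matrix.selfAdjoint_le_span_rankOneProjections [DecidableEq n] :
    selfAdjoint.submodule ℝ (Matrix n n 𝕜) ≤ span ℝ (rankOneProjections 𝕜 n) := by
  intro A (hA : A.IsHermitian)
  rw [hA.eq_sum_eigenvalues_smul_vecMulVec]
  refine sum_mem fun k _ => smul_mem _ _ (subset_span ?_)
  have hunit := hA.eigenvectorBasis.star_dotProduct_self k
  refine ⟨_, fun h0 => ?_, (rankOneProjection_eq_vecMulVec hunit).symm⟩
  simp [h0] at hunit

end RankOneProjection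

open Matrix in
theorem stmt_14_general (N : ℕ) :
    ∃ P : Fin (N ^ 2) → Matrix (Fin N) (Fin N) ℂ,
      (∀ i, ∃ v : Fin N → ℂ, v ≠ 0 ∧
        P i = (star v ⬝ᵥ v)⁻¹ • Matrix.vecMulVec v (star v)) ∧
      ∃ b : Module.Basis (Fin (N ^ 2)) ℝ (selfAdjoint.submodule ℝ (Matrix (Fin N) (Fin N) ℂ)),
        ∀ i, (b i : Matrix (Fin N) (Fin N) ℂ) = P i := by
  obtain ⟨b, hb⟩ := exists_basis_fin_of_le_span (s := rankOneProjections ℂ (Fin N))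
    (fun _ ⟨v, _, hP⟩ => hP ▸ isSelfAdjoint_rankOneProjection v)
    selfAdjoint_le_span_rankOneProjections
    (by rw [finrank_selfAdjoint, Fintype.card_fin])
  exact ⟨fun i => b i, hb, b, fun _ => rfl⟩

open Matrix in
theorem stmt_14 (N : ℕ) (hN : 0 < N) :
    ∃ P : Fin (N ^ 2) → Matrix (Fin N) (Fin N) ℂ,
      (∀ i, ∃ v : Fin N → ℂ, v ≠ 0 ∧
        P i = (star v ⬝ᵥ v)⁻¹ • Matrix.vecMulVec v (star v)) ∧
      ∃ b : Module.Basis (Fin (N ^ 2)) ℝ (selfAdjoint.submodule ℝ (Matrix (Fin N) (Fin N) ℂ)),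
        ∀ i, (b i : Matrix (Fin N) (Fin N) ℂ) = P i :=
  stmt_14_general N
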